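/- Let G be a weighted graph, k = 2R+1 for an integer R ≥ 0, and H′ ⊆ G a subgraph. Let P be a shortest x–y path in G containing (in order from x to y) the edges e_1 = {x, v_1}, e_i = {u_i, v_i}, and e_t = {u_t, y}, all belonging to H′, so that dist_G(x,y) = w(e_1) + dist_G(v_1,u_t) + w(e_t) and dist_G(v_1,u_t) = dist_G(v_1,u_i) + w(e_i) + dist_G(v_i,u_t). Let s_x, s_i, s_y be vertices with dist_{H′}(s_x,x) ≤ R·w(e_1), dist_{H′}(s_i,u_i) ≤ R·w(e_i), and dist_{H′}(y,s_y) ≤ R·w(e_t), and suppose dist_{H′}(v_1,u_i) ≤ k·dist_G(v_1,u_i) and dist_{H′}(v_i,u_t) ≤ k·dist_G(v_i,u_t). Then dist_{H′}(s_x,s_i) + dist_{H′}(s_i,s_y) ≤ k·dist_G(x,y) − R·(w(e_1)+w(e_t)). -/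

import Mathlib

/- Walk from `s_x` to `s_i` through `x`, the edge `e₁`, `v₁` and `uᵢ`, and from `s_i` to `s_y`
through `uᵢ`, the edge `eᵢ`, `vᵢ`, `uₜ`, the edge `eₜ` and `y`.  Every edge of the shortest path
is then paid for at most `2R + 1` times, except `e₁` and `eₜ`, which are paid for only `R + 1`
times: this saving is the term `R·(w(e₁) + w(eₜ))`. -/

open scoped ENNReal

noncomputable def walkWeight {V : Type*} {G : SimpleGraph V} (w : V → V → NNReal)
    {u v : V} (p : G.Walk u v) : ℝ≥0∞ :=
  (p.darts.map fun d => (w d.toProd.1 d.toProd.2 : ℝ≥0∞)).sum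

/-- Shortest-path distance in `G` w.r.t. the weights `w`. -/
noncomputable def wDist {V : Type*} (G : SimpleGraph V) (w : V → V → NNReal) (u v : V) : ℝ≥0∞ :=
  ⨅ p : G.Walk u v, walkWeight w p

open SimpleGraph

section WeightedDistance

variable {V : Type*} {G : SimpleGraph V} (w : V → V → NNReal)

lemma walkWeight_append {u v z : V} (p : G.Walk u v) (q : G.Walk v z) :
    walkWeight w (p.append q) = walkWeight w p + walkWeight w q := by
  simp [walkWeight, Walk.darts_append]

lemma walkWeight_cons {u v z : V} (h : G.Adj u v) (p : G.Walk v z) :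
    walkWeight w (Walk.cons h p) = w u v + walkWeight w p := by
  simp [walkWeight]

lemma walkWeight_reverse (hsymm : ∀ u v, w u v = w v u) {u v : V} (p : G.Walk u v) :
    walkWeight w p.reverse = walkWeight w p := by
  simp only [walkWeight, Walk.darts_reverse, List.map_reverse, List.sum_reverse, List.map_map]
  congr 1
  exact List.map_congr_left fun d _ => by simp [hsymm d.toProd.1]

lemma wDist_triangle (u m v : V) : wDist G w u v ≤ wDist G w u m + wDist G w m v := by
  simp only [wDist, ENNReal.iInf_add, ENNReal.add_iInf]
  exact le_iInf₂ fun q p => walkWeight_append w p q ▸ iInf_le _ _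

lemma wDist_comm (hsymm : ∀ u v, w u v = w v u) (u v : V) :
    wDist G w u v = wDist G w v u := by
  have key : ∀ a b : V, wDist G w a b ≤ wDist G w b a := fun a b =>
    le_iInf fun p => walkWeight_reverse w hsymm p ▸ iInf_le _ p.reverse
  exact le_antisymm (key u v) (key v u)

lemma wDist_le_add_wDist_of_adj {u v z : V} (h : G.Adj u v) :
    wDist G w u z ≤ w u v + wDist G w v z := by
  simp only [wDist, ENNReal.add_iInf]
  exact le_iInf fun p => walkWeight_cons w h p ▸ iInf_le _ _

lemma wDist_le_via_adj {s a b c t : V} (hab : G.Adj a b) :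
    wDist G w s t ≤ wDist G w s a + w a b + wDist G w b c + wDist G w c t :=
  calc wDist G w s t
      ≤ wDist G w s a + wDist G w a t := wDist_triangle w s a t
    _ ≤ wDist G w s a + (w a b + (wDist G w b c + wDist G w c t)) := by
        gcongr
        exact (wDist_le_add_wDist_of_adj w hab).trans (by gcongr; exact wDist_triangle w b c t)
    _ = wDist G w s a + w a b + wDist G w b c + wDist G w c t := by ring

end WeightedDistance

theorem center_dist_sum_after_addition_general {V : Type*} (G H' : SimpleGraph V)
    (w : V → V → NNReal)
    (hsymm : ∀ u v, w u v = w v u)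
    (R k : ℕ) (hk : k = 2 * R + 1)
    (x v1 ui vi ut y sx si sy : V)
    (he1 : H'.Adj x v1) (hei : H'.Adj ui vi) (het : H'.Adj ut y)
    (hG1 : wDist G w x y = (w x v1 : ℝ≥0∞) + wDist G w v1 ut + (w ut y : ℝ≥0∞))
    (hG2 : wDist G w v1 ut = wDist G w v1 ui + (w ui vi : ℝ≥0∞) + wDist G w vi ut)
    (hsx : wDist H' w sx x ≤ (R : ℝ≥0∞) * (w x v1 : ℝ≥0∞))
    (hsi : wDist H' w si ui ≤ (R : ℝ≥0∞) * (w ui vi : ℝ≥0∞))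
    (hsy : wDist H' w y sy ≤ (R : ℝ≥0∞) * (w ut y : ℝ≥0∞))
    (h1 : wDist H' w v1 ui ≤ (k : ℝ≥0∞) * wDist G w v1 ui)
    (h2 : wDist H' w vi ut ≤ (k : ℝ≥0∞) * wDist G w vi ut) :
    wDist H' w sx si + wDist H' w si sy +
        (R : ℝ≥0∞) * ((w x v1 : ℝ≥0∞) + (w ut y : ℝ≥0∞)) ≤
      (k : ℝ≥0∞) * wDist G w x y := by
  have hA := wDist_le_via_adj (s := sx) (c := ui) (t := si) w he1
  have hB := wDist_le_via_adj (s := si) (c := ut) (t := sy) w hei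
  have hut : wDist H' w ut sy ≤ w ut y + wDist H' w y sy := wDist_le_add_wDist_of_adj w het
  rw [wDist_comm w hsymm ui si] at hA
  calc wDist H' w sx si + wDist H' w si sy + R * (w x v1 + w ut y)
      ≤ (R * w x v1 + w x v1 + k * wDist G w v1 ui + R * w ui vi)
          + (R * w ui vi + w ui vi + k * wDist G w vi ut + (w ut y + R * w ut y))
          + R * (w x v1 + w ut y) := by
        gcongr
        · exact hA.trans (by gcongr)
        · exact hB.trans (by gcongr; exact hut.trans (by gcongr))
    _ = k * (w x v1 + (wDist G w v1 ui + w ui vi + wDist G w vi ut) + w ut y) := by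
        subst hk; push_cast; ring
    _ = k * wDist G w x y := by rw [hG1, hG2]

/-- **Claim.** Let `k = 2R+1` and `H' ⊆ G`.  Let a shortest `x`–`y` path in `G` contain,
in order, the edges `e₁ = {x,v₁}`, `eᵢ = {uᵢ,vᵢ}`, `eₜ = {uₜ,y}`, all in `H'`, so that
`dist_G(x,y) = w(e₁) + dist_G(v₁,uₜ) + w(eₜ)` and
`dist_G(v₁,uₜ) = dist_G(v₁,uᵢ) + w(eᵢ) + dist_G(vᵢ,uₜ)`.  Let `s_x, s_i, s_y` be centers
with `dist_{H'}(s_x,x) ≤ R·w(e₁)`, `dist_{H'}(s_i,uᵢ) ≤ R·w(eᵢ)`,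
`dist_{H'}(y,s_y) ≤ R·w(eₜ)`, and suppose `dist_{H'}(v₁,uᵢ) ≤ k·dist_G(v₁,uᵢ)` and
`dist_{H'}(vᵢ,uₜ) ≤ k·dist_G(vᵢ,uₜ)`.  Then
`dist_{H'}(s_x,s_i) + dist_{H'}(s_i,s_y) ≤ k·dist_G(x,y) − R·(w(e₁)+w(eₜ))`
(stated in the subtraction-free form). -/
theorem center_dist_sum_after_addition {V : Type*} (G H' : SimpleGraph V) (hH'G : H' ≤ G)
    (w : V → V → NNReal)
    (hsymm : ∀ u v, w u v = w v u)
    (hpos : ∀ u v, G.Adj u v → 0 < w u v)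
    (R k : ℕ) (hk : k = 2 * R + 1)
    (x v1 ui vi ut y sx si sy : V)
    (he1 : H'.Adj x v1) (hei : H'.Adj ui vi) (het : H'.Adj ut y)
    (hG1 : wDist G w x y = (w x v1 : ℝ≥0∞) + wDist G w v1 ut + (w ut y : ℝ≥0∞))
    (hG2 : wDist G w v1 ut = wDist G w v1 ui + (w ui vi : ℝ≥0∞) + wDist G w vi ut)
    (hsx : wDist H' w sx x ≤ (R : ℝ≥0∞) * (w x v1 : ℝ≥0∞))
    (hsi : wDist H' w si ui ≤ (R : ℝ≥0∞) * (w ui vi : ℝ≥0∞))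
    (hsy : wDist H' w y sy ≤ (R : ℝ≥0∞) * (w ut y : ℝ≥0∞))
    (h1 : wDist H' w v1 ui ≤ (k : ℝ≥0∞) * wDist G w v1 ui)
    (h2 : wDist H' w vi ut ≤ (k : ℝ≥0∞) * wDist G w vi ut) :
    wDist H' w sx si + wDist H' w si sy +
        (R : ℝ≥0∞) * ((w x v1 : ℝ≥0∞) + (w ut y : ℝ≥0∞)) ≤
      (k : ℝ≥0∞) * wDist G w x y :=
  center_dist_sum_after_addition_general G H' w hsymm R k hk x v1 ui vi ut y sx si sy he1 hei het
    hG1 hG2 hsx hsi hsy h1 h2
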